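/- arXiv:1407.3112 — 5 statements merged into one kernel-verified Lean document; each statement's English description precedes it below -/
import Mathlib

section
/- Let G be a finite group and Ḡ = F₂/N_G as in the context. Then: (1) the intersection of all subgroups of Ḡ of index G is the trivial subgroup; (2) if Γ is any group in which the intersection of all subgroups of index G is trivial, and x′, y′ are two elements generating Γ, then there exists a group homomorphism Ḡ → Γ sending x to x′ and y to y′; (3) if x′, y′ is any pair of elements generating Ḡ, then there is an automorphism of Ḡ sending x to x′ and y to y′. -/
/-!
Write `K_Γ` for the intersection of the index-`G` subgroups of `Γ`. A surjection `Γ → Δ` maps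
`K_Γ` into `K_Δ`, since epimorphisms `Δ → G` pull back to epimorphisms `Γ → G`; and every
epimorphism `Γ → G` factors through `Γ ⧸ K_Γ`, so that quotient has trivial `K`, which is (1).
For (2), the surjection `F₂ → Γ` with `x, y ↦ x', y'` kills `N_G = K_{F₂}` because `K_Γ = ⊥`.
For (3), (2) gives an endomorphism of `Ḡ` hitting both generators, hence onto; `Ḡ` is finite
because there are only finitely many homomorphisms `F₂ → G`, so `N_G` is a finite intersection
of finite-index subgroups, and a surjective endomorphism of a finite group is an automorphism.
-/

/-- The free group on two generators. -/
abbrev F2 : Type := FreeGroup Bool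

/-- The generator `x` of `F₂`. -/
def fx : F2 := FreeGroup.of true

/-- The generator `y` of `F₂`. -/
def fy : F2 := FreeGroup.of false

/-- A subgroup `N` of `Γ` *has index `G`* if it is normal with quotient isomorphic to `G`,
equivalently it is the kernel of a surjective homomorphism onto `G`. -/
def HasIndex (G : Type) [Group G] {Γ : Type} [Group Γ] (N : Subgroup Γ) : Prop :=
  ∃ f : Γ →* G, Function.Surjective f ∧ f.ker = N

/-- `N_G`: the intersection of all subgroups of `F₂` of index `G`. -/
def NG (G : Type) [Group G] : Subgroup F2 := sInf {N | HasIndex G N}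

instance NG_normal (G : Type) [Group G] : (NG G).Normal := by
  constructor
  intro n hn g
  rw [NG, Subgroup.mem_sInf] at hn ⊢
  rintro N ⟨f, hf, rfl⟩
  have h1 : f n = 1 := hn f.ker ⟨f, hf, rfl⟩
  simp [MonoidHom.mem_ker, h1]

/-- The group `Ḡ = F₂ / N_G`. -/
abbrev Gbar (G : Type) [Group G] : Type := F2 ⧸ NG G

/-- The canonical generator `x` of `Ḡ`. -/
def xbar (G : Type) [Group G] : Gbar G := QuotientGroup.mk fx

/-- The canonical generator `y` of `Ḡ`. -/
def ybar (G : Type) [Group G] : Gbar G := QuotientGroup.mk fy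

section HasIndex

variable {G : Type} [Group G] {Γ : Type} [Group Γ]

theorem mem_sInf_hasIndex_iff {g : Γ} :
    g ∈ sInf {N : Subgroup Γ | HasIndex G N} ↔ ∀ f : Γ →* G, Function.Surjective f → f g = 1 := by
  simp only [Subgroup.mem_sInf, Set.mem_ofPred_eq, HasIndex]
  exact ⟨fun h f hf => h f.ker ⟨f, hf, rfl⟩, by rintro h _ ⟨f, hf, rfl⟩; exact h f hf⟩

instance normal_sInf_hasIndex : (sInf {N : Subgroup Γ | HasIndex G N}).Normal :=
  ⟨fun n hn g => mem_sInf_hasIndex_iff.2 fun f hf => by simp [mem_sInf_hasIndex_iff.1 hn f hf]⟩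

theorem sInf_hasIndex_le_comap {Δ : Type} [Group Δ] {φ : Γ →* Δ} (hφ : Function.Surjective φ) :
    sInf {N : Subgroup Γ | HasIndex G N} ≤ (sInf {N : Subgroup Δ | HasIndex G N}).comap φ :=
  fun _ hg => mem_sInf_hasIndex_iff.2 fun f hf => mem_sInf_hasIndex_iff.1 hg (f.comp φ) (hf.comp hφ)

variable (G Γ) in
theorem sInf_hasIndex_quotient_eq_bot :
    sInf {N : Subgroup (Γ ⧸ sInf {N : Subgroup Γ | HasIndex G N}) | HasIndex G N} = ⊥ := by
  refine eq_bot_iff.2 fun g hg => ?_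
  induction g using QuotientGroup.induction_on with
  | H w =>
    rw [Subgroup.mem_bot, QuotientGroup.eq_one_iff, mem_sInf_hasIndex_iff]
    intro f hf
    have hle : sInf {N : Subgroup Γ | HasIndex G N} ≤ f.ker := sInf_le ⟨f, hf, rfl⟩
    exact mem_sInf_hasIndex_iff.1 hg _ (QuotientGroup.lift_surjective_of_surjective _ f hf hle)

instance finiteIndex_sInf_hasIndex [Finite G] [Finite (Γ →* G)] :
    (sInf {N : Subgroup Γ | HasIndex G N}).FiniteIndex := by
  have : Finite {N : Subgroup Γ | HasIndex G N} :=
    ((Set.finite_range MonoidHom.ker).subset (by rintro _ ⟨f, -, rfl⟩; exact ⟨f, rfl⟩)).to_subtype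
  rw [sInf_eq_iInf']
  exact Subgroup.finiteIndex_iInf fun ⟨_, f, _, hN⟩ => hN ▸ Subgroup.finiteIndex_ker f

end HasIndex

theorem MonoidHom.surjective_of_closure_pair_eq_top {H K : Type} [Group H] [Group K] {f : H →* K}
    {a b : K} (hab : Subgroup.closure {a, b} = ⊤) (ha : a ∈ f.range) (hb : b ∈ f.range) :
    Function.Surjective f := by
  rw [← MonoidHom.range_eq_top, eq_top_iff, ← hab, Subgroup.closure_le]
  exact Set.insert_subset ha (Set.singleton_subset_iff.2 hb)

instance FreeGroup.finite_monoidHom {α G : Type} [Finite α] [Group G] [Finite G] :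
    Finite (FreeGroup α →* G) :=
  Finite.of_equiv _ FreeGroup.lift

theorem exists_hom_gbar (G : Type) [Group G] {Γ : Type} [Group Γ]
    (hΓ : sInf {N : Subgroup Γ | HasIndex G N} = ⊥) {x' y' : Γ}
    (hgen : Subgroup.closure {x', y'} = ⊤) :
    ∃ f : Gbar G →* Γ, f (xbar G) = x' ∧ f (ybar G) = y' := by
  let φ : F2 →* Γ := FreeGroup.lift fun b => cond b x' y'
  have hφ : Function.Surjective φ := by
    rw [FreeGroup.lift_surjective_iff_closure_range_eq_top, ← hgen]
    congr 1
    ext; simp [or_comm, eq_comm]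
  have hker : NG G ≤ φ.ker := by
    have h := sInf_hasIndex_le_comap (G := G) hφ
    rwa [hΓ, MonoidHom.comap_bot] at h
  exact ⟨QuotientGroup.lift _ φ hker, FreeGroup.lift_apply_of, FreeGroup.lift_apply_of⟩

theorem exists_mulAut_gbar (G : Type) [Group G] [Finite G] {x' y' : Gbar G}
    (hgen : Subgroup.closure {x', y'} = ⊤) :
    ∃ φ : MulAut (Gbar G), φ (xbar G) = x' ∧ φ (ybar G) = y' := by
  obtain ⟨f, hx, hy⟩ := exists_hom_gbar G (sInf_hasIndex_quotient_eq_bot G F2) hgen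
  have hf : Function.Surjective f :=
    f.surjective_of_closure_pair_eq_top hgen ⟨xbar G, hx⟩ ⟨ybar G, hy⟩
  have : (NG G).FiniteIndex := finiteIndex_sInf_hasIndex
  exact ⟨MulEquiv.ofBijective f ⟨Finite.injective_iff_surjective.2 hf, hf⟩, hx, hy⟩

/-- Lemma (basic properties of `Ḡ`): (1) the intersection of all subgroups of `Ḡ` of index `G`
is trivial; (2) if `Γ` is any group in which the intersection of all subgroups of index `G` is
trivial, and `x'`, `y'` generate `Γ`, then there is a homomorphism `Ḡ → Γ` with `x ↦ x'`,
`y ↦ y'`; (3) if `x'`, `y'` generate `Ḡ`, then there is an automorphism of `Ḡ` with `x ↦ x'`,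
`y ↦ y'`. -/
theorem stmt0 (G : Type) [Group G] [Finite G] :
    (sInf {N : Subgroup (Gbar G) | HasIndex G N} = ⊥) ∧
    (∀ (Γ : Type) [Group Γ], sInf {N : Subgroup Γ | HasIndex G N} = ⊥ →
      ∀ x' y' : Γ, Subgroup.closure {x', y'} = ⊤ →
        ∃ f : Gbar G →* Γ, f (xbar G) = x' ∧ f (ybar G) = y') ∧
    (∀ x' y' : Gbar G, Subgroup.closure {x', y'} = ⊤ →
      ∃ φ : MulAut (Gbar G), φ (xbar G) = x' ∧ φ (ybar G) = y') :=
  ⟨sInf_hasIndex_quotient_eq_bot G F2, fun _ _ hΓ _ _ => exists_hom_gbar G hΓ,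
    fun _ _ => exists_mulAut_gbar G⟩
end

section
/- Let G be a finite group. Let x̃ = (x_1,…,x_r) and ỹ = (y_1,…,y_r) in the direct power G^r, and let G̃ = ⟨x̃, ỹ⟩ be the subgroup of G^r they generate. Then there is a group isomorphism Ḡ → G̃ sending the canonical generator x of Ḡ to x̃ and the canonical generator y of Ḡ to ỹ. -/
/-- `𝒫`: the set of pairs of elements generating `G`. -/
def GenPairs (G : Type) [Group G] : Set (G × G) := {p | Subgroup.closure {p.1, p.2} = ⊤}

def pairLift {H : Type*} [Group H] (a b : H) : F2 →* H :=
  FreeGroup.lift fun t => cond t a b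

section PairLift

variable {H K : Type*} [Group H] [Group K]

@[simp]
theorem pairLift_fx (a b : H) : pairLift a b fx = a :=
  FreeGroup.lift_apply_of

@[simp]
theorem pairLift_fy (a b : H) : pairLift a b fy = b :=
  FreeGroup.lift_apply_of

theorem eq_pairLift (f : F2 →* H) : f = pairLift (f fx) (f fy) := by
  ext (_ | _)
  exacts [(pairLift_fy _ _).symm, (pairLift_fx _ _).symm]

theorem comp_pairLift (f : H →* K) (a b : H) : f.comp (pairLift a b) = pairLift (f a) (f b) := by
  rw [eq_pairLift (f.comp _)]
  simp

theorem range_pairLift (a b : H) : (pairLift a b).range = Subgroup.closure {a, b} := by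
  rw [pairLift, FreeGroup.range_lift_eq_closure]
  congr 1
  ext c
  simp [Set.range, Bool.exists_bool, or_comm, eq_comm]

theorem pairLift_surjective_iff {G : Type} [Group G] (a b : G) :
    Function.Surjective (pairLift a b) ↔ (a, b) ∈ GenPairs G := by
  rw [← MonoidHom.range_eq_top, range_pairLift]
  rfl

theorem ker_pairLift_mulEquiv (α : H ≃* K) (a b : H) :
    (pairLift (α a) (α b)).ker = (pairLift a b).ker := by
  rw [← MonoidHom.ker_mulEquiv_comp (pairLift a b) α, comp_pairLift]
  rfl

theorem ker_pairLift_pi {ι : Type*} {H : ι → Type*} [∀ i, Group (H i)] (a b : ∀ i, H i) :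
    (pairLift a b).ker = ⨅ i, (pairLift (a i) (b i)).ker := by
  ext w
  have eval_pairLift (i : ι) : pairLift a b w i = pairLift (a i) (b i) w :=
    DFunLike.congr_fun (comp_pairLift (Pi.evalMonoidHom H i) a b) w
  simp only [MonoidHom.mem_ker, Subgroup.mem_iInf, funext_iff, eval_pairLift, Pi.one_apply]

end PairLift

theorem hasIndex_iff {G : Type} [Group G] (N : Subgroup F2) :
    HasIndex G N ↔ ∃ p ∈ GenPairs G, (pairLift p.1 p.2).ker = N := by
  constructor
  · rintro ⟨f, hf, rfl⟩
    rw [eq_pairLift f] at hf ⊢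
    exact ⟨_, (pairLift_surjective_iff _ _).1 hf, rfl⟩
  · rintro ⟨p, hp, rfl⟩
    exact ⟨_, (pairLift_surjective_iff _ _).2 hp, rfl⟩

theorem NG_eq_iInf_ker (G : Type) [Group G] :
    NG G = ⨅ p ∈ GenPairs G, (pairLift p.1 p.2).ker := by
  have : {N | HasIndex G N} = (fun p : G × G => (pairLift p.1 p.2).ker) '' GenPairs G := by
    ext N
    exact hasIndex_iff N
  rw [NG, this, sInf_image]

theorem NG_eq_ker_pairLift_of_orbit_reps (G : Type) [Group G] {ι : Type*} (rep : ι → G × G)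
    (hrep : ∀ i, rep i ∈ GenPairs G)
    (hcover : ∀ q ∈ GenPairs G, ∃ i, ∃ α : MulAut G, (α (rep i).1, α (rep i).2) = q) :
    NG G = (pairLift (fun i => (rep i).1) (fun i => (rep i).2)).ker := by
  rw [NG_eq_iInf_ker, ker_pairLift_pi]
  apply le_antisymm
  · exact le_iInf fun i => iInf₂_le (rep i) (hrep i)
  · refine le_iInf₂ fun q hq => ?_
    obtain ⟨i, α, rfl⟩ := hcover q hq
    rw [ker_pairLift_mulEquiv]
    exact iInf_le _ i

theorem exists_quotient_mulEquiv_closure {H : Type*} [Group H] (a b : H) (N : Subgroup F2)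
    [N.Normal] (hN : (pairLift a b).ker = N) :
    ∃ e : F2 ⧸ N ≃* Subgroup.closure {a, b},
      (e (QuotientGroup.mk fx) : H) = a ∧ (e (QuotientGroup.mk fy) : H) = b :=
  ⟨((QuotientGroup.quotientMulEquivOfEq hN.symm).trans
      (QuotientGroup.quotientKerEquivRange _)).trans (MulEquiv.subgroupCongr (range_pairLift a b)),
    pairLift_fx a b, pairLift_fy a b⟩

theorem stmt1_general (G : Type) [Group G]
    (r : ℕ) (rep : Fin r → G × G)
    (hrep : ∀ i, rep i ∈ GenPairs G)
    (hcover : ∀ q ∈ GenPairs G, ∃ i : Fin r, ∃ α : MulAut G, (α (rep i).1, α (rep i).2) = q) :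
    ∃ e : Gbar G ≃* ↥(Subgroup.closure
        ({fun i => (rep i).1, fun i => (rep i).2} : Set (Fin r → G))),
      (e (xbar G) : Fin r → G) = (fun i => (rep i).1) ∧
      (e (ybar G) : Fin r → G) = (fun i => (rep i).2) :=
  exists_quotient_mulEquiv_closure _ _ _ (NG_eq_ker_pairLift_of_orbit_reps G rep hrep hcover).symm

/-- Let `(x_1,y_1), …, (x_r,y_r)` be a system of representatives for the orbits of `Aut(G)`
on `𝒫`. Let `x̃ = (x_1,…,x_r)` and `ỹ = (y_1,…,y_r)` in `G^r` and let `G̃` be the subgroup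
they generate. Then there is an isomorphism `Ḡ ≃ G̃` with `x ↦ x̃`, `y ↦ ỹ`. -/
theorem stmt1 (G : Type) [Group G] [Finite G]
    (r : ℕ) (rep : Fin r → G × G)
    (hrep : ∀ i, rep i ∈ GenPairs G)
    (hdist : ∀ i j : Fin r, (∃ α : MulAut G, (α (rep i).1, α (rep i).2) = rep j) → i = j)
    (hcover : ∀ q ∈ GenPairs G, ∃ i : Fin r, ∃ α : MulAut G, (α (rep i).1, α (rep i).2) = q) :
    ∃ e : Gbar G ≃* ↥(Subgroup.closure
        ({fun i => (rep i).1, fun i => (rep i).2} : Set (Fin r → G))),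
      (e (xbar G) : Fin r → G) = (fun i => (rep i).1) ∧
      (e (ybar G) : Fin r → G) = (fun i => (rep i).2) :=
  stmt1_general G r rep hrep hcover
end

section
/- Let G be a finite group. There is a group homomorphism Out(Ḡ) → Sym(𝒫_c) whose image lies in the centralizer in Sym(𝒫_c) of the image of the Out(G)-action, and whose corresponding action satisfies φ·[x_i, y_i]_c = [φ_i⁻¹(x_{σ(i)}), φ_i⁻¹(y_{σ(i)})]_c for every automorphism φ of Ḡ and every 1 ≤ i ≤ r, where σ = σ(φ) and the φ_i are as in the context. -/
/-- The subgroup of inner automorphisms of `G`. -/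
def Inn (G : Type) [Group G] : Subgroup (MulAut G) := (MulAut.conj : G →* MulAut G).range

instance Inn_normal (G : Type) [Group G] : (Inn G).Normal := by
  constructor
  rintro n ⟨g, rfl⟩ φ
  refine ⟨φ g, ?_⟩
  ext h
  simp [MulAut.conj_apply, MulAut.inv_def, map_mul, map_inv]

/-- The outer automorphism group of `G`. -/
abbrev OutG (G : Type) [Group G] : Type := MulAut G ⧸ Inn G

/-- The canonical projection `Aut(G) → Out(G)`. -/
def OutMk {G : Type} [Group G] : MulAut G →* OutG G := QuotientGroup.mk' (Inn G)

/-- The setoid on `𝒫` given by simultaneous conjugation (the action of inner automorphisms). -/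
def pairSetoid (G : Type) [Group G] : Setoid ↥(GenPairs G) where
  r p q := ∃ t : G, t * (p : G × G).1 * t⁻¹ = (q : G × G).1 ∧
    t * (p : G × G).2 * t⁻¹ = (q : G × G).2
  iseqv := by
    constructor
    · intro p; exact ⟨1, by simp, by simp⟩
    · rintro p q ⟨t, h1, h2⟩
      exact ⟨t⁻¹, by rw [← h1]; group, by rw [← h2]; group⟩
    · rintro p q s ⟨t, h1, h2⟩ ⟨u, h3, h4⟩
      exact ⟨u * t, by rw [← h3, ← h1]; group, by rw [← h4, ← h2]; group⟩

/-- `𝒫_c`: the set of generating pairs of `G` up to simultaneous conjugation. -/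
abbrev PC (G : Type) [Group G] : Type := Quotient (pairSetoid G)

/-- The class `[g,h]_c` in `𝒫_c` of a generating pair. -/
def pcMk {G : Type} [Group G] (p : G × G) (hp : p ∈ GenPairs G) : PC G :=
  Quotient.mk (pairSetoid G) ⟨p, hp⟩

/-- An automorphism of `G` applied to a generating pair. -/
def autPair {G : Type} [Group G] (α : MulAut G) (p : ↥(GenPairs G)) : ↥(GenPairs G) :=
  ⟨(α (p : G × G).1, α (p : G × G).2), by
    have hp : Subgroup.closure {(p : G × G).1, (p : G × G).2} = ⊤ := p.2
    show Subgroup.closure {α (p : G × G).1, α (p : G × G).2} = ⊤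
    have h1 : ({α (p : G × G).1, α (p : G × G).2} : Set G)
        = α.toMonoidHom '' {(p : G × G).1, (p : G × G).2} := by
      rw [Set.image_pair]; rfl
    rw [h1, ← MonoidHom.map_closure, hp]
    exact Subgroup.map_top_of_surjective _ α.surjective⟩

/-- The action of `Aut(G)` on `𝒫_c`, inducing the action of `Out(G)`. -/
instance pcAction (G : Type) [Group G] : MulAction (MulAut G) (PC G) where
  smul α := Quotient.map (autPair α) (by
    rintro p q ⟨t, h1, h2⟩
    refine ⟨α t, ?_, ?_⟩
    · show α t * α (p : G × G).1 * (α t)⁻¹ = α (q : G × G).1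
      rw [← map_inv, ← map_mul, ← map_mul, h1]
    · show α t * α (p : G × G).2 * (α t)⁻¹ = α (q : G × G).2
      rw [← map_inv, ← map_mul, ← map_mul, h2])
  one_smul := by
    intro z
    induction z using Quotient.ind
    rfl
  mul_smul := by
    intro a b z
    induction z using Quotient.ind
    rfl

/-- `[α(g), α(h)]_c` for a generating pair `(g,h)` and `α ∈ Aut(G)`. -/
def pcMkA {G : Type} [Group G] (α : MulAut G) (p : G × G) (hp : p ∈ GenPairs G) : PC G :=
  α • pcMk p hp

/-!
A generating pair `(g, h)` of `G` is the same as a homomorphism `Ḡ → G` sending `x, y` to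
`g, h` (`liftPair`): `N_G` lies in the kernel of every surjection `F₂ → G`. Hence `Aut(Ḡ)` acts
on generating pairs by precomposing with `φ⁻¹`, and `Aut(G)` by postcomposing, so the two
actions commute. Precomposing with conjugation by `g ∈ Ḡ` is postcomposing with conjugation by
the image of `g` in `G`, so `Inn(Ḡ)` acts trivially on `𝒫_c` and the action factors through
`Out(Ḡ)`. The formula for `φ · [x_i, y_i]_c` is `p_i ∘ φ⁻¹ = φ_i⁻¹ ∘ p_{σ(i)}` read at `x, y`.
-/

theorem Subgroup.closure_pair_map_eq_top {Γ H : Type*} [Group Γ] [Group H] {f : Γ →* H}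
    (hf : Function.Surjective f) {a b : Γ} (h : Subgroup.closure {a, b} = ⊤) :
    Subgroup.closure {f a, f b} = ⊤ := by
  rw [← Set.image_pair, ← MonoidHom.map_closure, h, Subgroup.map_top_of_surjective f hf]

theorem closure_fx_fy : Subgroup.closure {fx, fy} = ⊤ := by
  rw [Set.pair_comm, ← FreeGroup.closure_range_of, Bool.range_eq]
  rfl

section GenPairs

variable {G : Type} [Group G]

theorem NG_le_ker {f : F2 →* G} (hf : Function.Surjective f) : NG G ≤ f.ker :=
  sInf_le ⟨f, hf, rfl⟩

theorem closure_xbar_ybar : Subgroup.closure {xbar G, ybar G} = ⊤ :=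
  Subgroup.closure_pair_map_eq_top (QuotientGroup.mk'_surjective _) closure_fx_fy

theorem Gbar.hom_ext {H : Type*} [Group H] {f g : Gbar G →* H}
    (hx : f (xbar G) = g (xbar G)) (hy : f (ybar G) = g (ybar G)) : f = g :=
  MonoidHom.eq_of_eqOn_dense closure_xbar_ybar (by rintro _ (rfl | rfl) <;> assumption)

theorem map_xbar_ybar_mem_genPairs {f : Gbar G →* G} (hf : Function.Surjective f) :
    (f (xbar G), f (ybar G)) ∈ GenPairs G :=
  Subgroup.closure_pair_map_eq_top hf closure_xbar_ybar

def freeLiftPair (q : G × G) : F2 →* G :=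
  FreeGroup.lift fun b => cond b q.1 q.2

theorem freeLiftPair_surjective {q : G × G} (hq : q ∈ GenPairs G) :
    Function.Surjective (freeLiftPair q) := by
  rw [← MonoidHom.range_eq_top, eq_top_iff, ← hq, Subgroup.closure_le]
  rintro _ (rfl | rfl)
  exacts [⟨fx, FreeGroup.lift_apply_of⟩, ⟨fy, FreeGroup.lift_apply_of⟩]

def liftPair (q : GenPairs G) : Gbar G →* G :=
  QuotientGroup.lift _ (freeLiftPair q.1) (NG_le_ker (freeLiftPair_surjective q.2))

@[simp]
theorem liftPair_xbar (q : GenPairs G) : liftPair q (xbar G) = q.1.1 :=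
  FreeGroup.lift_apply_of

@[simp]
theorem liftPair_ybar (q : GenPairs G) : liftPair q (ybar G) = q.1.2 :=
  FreeGroup.lift_apply_of

theorem eq_liftPair {q : GenPairs G} {f : Gbar G →* G} (hx : f (xbar G) = q.1.1)
    (hy : f (ybar G) = q.1.2) : f = liftPair q :=
  Gbar.hom_ext (by rw [hx, liftPair_xbar]) (by rw [hy, liftPair_ybar])

theorem liftPair_surjective (q : GenPairs G) : Function.Surjective (liftPair q) :=
  QuotientGroup.lift_surjective_of_surjective _ _ (freeLiftPair_surjective q.2) _

@[simp]
theorem coe_autPair (α : MulAut G) (q : GenPairs G) :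
    (autPair α q : G × G) = (α q.1.1, α q.1.2) :=
  rfl

theorem liftPair_autPair (α : MulAut G) (q : GenPairs G) :
    liftPair (autPair α q) = α.toMonoidHom.comp (liftPair q) :=
  (eq_liftPair (by simp) (by simp)).symm

theorem liftPair_eq_conj_comp {q q' : GenPairs G} (h : (pairSetoid G).r q q') :
    ∃ t : G, liftPair q' = (MulAut.conj t).toMonoidHom.comp (liftPair q) := by
  obtain ⟨t, h1, h2⟩ := h
  exact ⟨t, (eq_liftPair (by simp [h1]) (by simp [h2])).symm⟩

end GenPairs

section AutGbarAction

variable {G : Type} [Group G]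

def autGbarPair (φ : MulAut (Gbar G)) (q : GenPairs G) : GenPairs G :=
  ⟨_, map_xbar_ybar_mem_genPairs (f := (liftPair q).comp (φ⁻¹ : MulAut (Gbar G)).toMonoidHom)
    ((liftPair_surjective q).comp (φ⁻¹ : MulAut (Gbar G)).surjective)⟩

@[simp]
theorem coe_autGbarPair (φ : MulAut (Gbar G)) (q : GenPairs G) :
    (autGbarPair φ q : G × G) = (liftPair q (φ⁻¹ (xbar G)), liftPair q (φ⁻¹ (ybar G))) :=
  rfl

theorem liftPair_autGbarPair (φ : MulAut (Gbar G)) (q : GenPairs G) :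
    liftPair (autGbarPair φ q) = (liftPair q).comp (φ⁻¹ : MulAut (Gbar G)).toMonoidHom :=
  (eq_liftPair rfl rfl).symm

theorem autGbarPair_one (q : GenPairs G) : autGbarPair 1 q = q := by
  ext <;> simp

theorem autGbarPair_mul (φ ψ : MulAut (Gbar G)) (q : GenPairs G) :
    autGbarPair (φ * ψ) q = autGbarPair φ (autGbarPair ψ q) := by
  ext <;> simp [liftPair_autGbarPair, MulAut.mul_apply]

theorem autGbarPair_autPair (φ : MulAut (Gbar G)) (α : MulAut G) (q : GenPairs G) :
    autGbarPair φ (autPair α q) = autPair α (autGbarPair φ q) := by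
  ext <;> simp [liftPair_autPair]

theorem autGbarPair_eq_autPair_inv {φ : MulAut (Gbar G)} {ψ : MulAut G} {q q' : GenPairs G}
    (h : (liftPair q').comp φ.toMonoidHom = ψ.toMonoidHom.comp (liftPair q)) :
    autGbarPair φ q = autPair ψ⁻¹ q' := by
  have key (z : Gbar G) : liftPair q (φ⁻¹ z) = ψ⁻¹ (liftPair q' z) := by
    simpa using congr(ψ⁻¹ ($h.symm (φ⁻¹ z)))
  ext <;> simp only [coe_autGbarPair, coe_autPair, key, liftPair_xbar, liftPair_ybar]

abbrev autGbarAction : MulAction (MulAut (Gbar G)) (PC G) where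
  smul φ := Quotient.map (autGbarPair φ) fun q q' h => by
    obtain ⟨t, ht⟩ := liftPair_eq_conj_comp h
    exact ⟨t, by simp [ht], by simp [ht]⟩
  one_smul := Quotient.ind fun q => congrArg _ (autGbarPair_one q)
  mul_smul φ ψ := Quotient.ind fun q => congrArg _ (autGbarPair_mul φ ψ q)

variable (G) in
def autGbarPerm : MulAut (Gbar G) →* Equiv.Perm (PC G) :=
  letI := autGbarAction (G := G)
  MulAction.toPermHom _ _

theorem autGbarPerm_mk (φ : MulAut (Gbar G)) (q : GenPairs G) :
    autGbarPerm G φ (Quotient.mk _ q) = Quotient.mk _ (autGbarPair φ q) :=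
  rfl

theorem autGbarPerm_conj (g : Gbar G) : autGbarPerm G (MulAut.conj g) = 1 := by
  ext z
  induction z using Quotient.ind with
  | _ q =>
    refine (autGbarPerm_mk _ q).trans (Quotient.sound ⟨liftPair q g, ?_, ?_⟩) <;>
      simp [mul_assoc]

theorem inn_le_ker_autGbarPerm : Inn (Gbar G) ≤ (autGbarPerm G).ker := by
  rintro _ ⟨g, rfl⟩
  exact autGbarPerm_conj g

theorem autGbarPerm_smul (φ : MulAut (Gbar G)) (α : MulAut G) (z : PC G) :
    autGbarPerm G φ (α • z) = α • autGbarPerm G φ z := by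
  induction z using Quotient.ind with
  | _ q => exact congrArg _ (autGbarPair_autPair φ α q)

theorem autGbarPerm_pcMk {φ : MulAut (Gbar G)} {ψ : MulAut G} {a b : G × G}
    (ha : a ∈ GenPairs G) (hb : b ∈ GenPairs G)
    (h : (liftPair ⟨b, hb⟩).comp φ.toMonoidHom = ψ.toMonoidHom.comp (liftPair ⟨a, ha⟩)) :
    autGbarPerm G φ (pcMk a ha) = pcMkA ψ⁻¹ b hb :=
  congrArg _ (autGbarPair_eq_autPair_inv h)

end AutGbarAction

theorem stmt9_general (G : Type) [Group G]
    (r : ℕ) (rep : Fin r → G × G)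
    (hrep : ∀ i, rep i ∈ GenPairs G)
    (p : Fin r → (Gbar G →* G))
    (hp : ∀ i, p i (xbar G) = (rep i).1 ∧ p i (ybar G) = (rep i).2) :
    ∃ Φ : OutG (Gbar G) →* Equiv.Perm (PC G),
      (∀ (c : OutG (Gbar G)) (α : MulAut G) (z : PC G), Φ c (α • z) = α • Φ c z) ∧
      (∀ (φ : MulAut (Gbar G)) (σ : Equiv.Perm (Fin r)) (ψ : Fin r → MulAut G),
        (∀ i, (p (σ i)).comp φ.toMonoidHom = (ψ i).toMonoidHom.comp (p i)) →
        ∀ i : Fin r,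
          Φ (OutMk φ) (pcMk (rep i) (hrep i)) = pcMkA (ψ i)⁻¹ (rep (σ i)) (hrep (σ i))) := by
  have hp_eq (i : Fin r) : p i = liftPair ⟨rep i, hrep i⟩ := eq_liftPair (hp i).1 (hp i).2
  refine ⟨QuotientGroup.lift _ (autGbarPerm G) inn_le_ker_autGbarPerm, ?_, ?_⟩
  · intro c α z
    induction c using QuotientGroup.induction_on with
    | H φ => exact autGbarPerm_smul φ α z
  · intro φ σ ψ hφ i
    exact autGbarPerm_pcMk (hrep i) (hrep (σ i)) (by simpa only [hp_eq] using hφ i)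

/-- There is a homomorphism `Out(Ḡ) → Sym(𝒫_c)` whose image centralizes the `Out(G)`-action,
and whose action satisfies `φ·[x_i,y_i]_c = [φ_i⁻¹(x_{σ(i)}), φ_i⁻¹(y_{σ(i)})]_c` whenever
`p_{σ(i)} ∘ φ = φ_i ∘ p_i`. -/
theorem stmt9 (G : Type) [Group G] [Finite G]
    (r : ℕ) (rep : Fin r → G × G)
    (hrep : ∀ i, rep i ∈ GenPairs G)
    (hdist : ∀ i j : Fin r, (∃ α : MulAut G, (α (rep i).1, α (rep i).2) = rep j) → i = j)
    (hcover : ∀ q ∈ GenPairs G, ∃ i : Fin r, ∃ α : MulAut G, (α (rep i).1, α (rep i).2) = q)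
    (p : Fin r → (Gbar G →* G))
    (hp : ∀ i, p i (xbar G) = (rep i).1 ∧ p i (ybar G) = (rep i).2) :
    ∃ Φ : OutG (Gbar G) →* Equiv.Perm (PC G),
      (∀ (c : OutG (Gbar G)) (α : MulAut G) (z : PC G), Φ c (α • z) = α • Φ c z) ∧
      (∀ (φ : MulAut (Gbar G)) (σ : Equiv.Perm (Fin r)) (ψ : Fin r → MulAut G),
        (∀ i, (p (σ i)).comp φ.toMonoidHom = (ψ i).toMonoidHom.comp (p i)) →
        ∀ i : Fin r,
          Φ (OutMk φ) (pcMk (rep i) (hrep i)) = pcMkA (ψ i)⁻¹ (rep (σ i)) (hrep (σ i))) :=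
  stmt9_general G r rep hrep p hp
end

section
/- Let G be a finite group, let H be the subgroup of Sym(𝒫_c) generated by the image of the Out(G)-action together with the permutations θ̄ and δ̄, let m be the largest cardinality of a conjugacy class of G, and let Z be the centre of G. Then 𝒮(G) is isomorphic to a finite direct product of wreath products E_k ≀ S_{r_k} (the semidirect product of E_k^{r_k} by the symmetric group S_{r_k} permuting the factors), where each E_k is a subquotient of H (a quotient of a subgroup of H), Σ_k r_k = r, and each r_k satisfies r_k ≤ |Z|·m²/|G|. -/
/-- Swapping the two entries of a generating pair. -/
def swapPair {G : Type} [Group G] (p : ↥(GenPairs G)) : ↥(GenPairs G) :=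
  ⟨((p : G × G).2, (p : G × G).1), by
    have hp : Subgroup.closure {(p : G × G).1, (p : G × G).2} = ⊤ := p.2
    show Subgroup.closure {(p : G × G).2, (p : G × G).1} = ⊤
    rwa [Set.pair_comm]⟩

/-- The permutation `θ̄` of `𝒫_c`, given by `[g,h]_c ↦ [h,g]_c`. -/
def thetaBar (G : Type) [Group G] : Equiv.Perm (PC G) :=
  Function.Involutive.toPerm
    (Quotient.map swapPair (by rintro p q ⟨t, h1, h2⟩; exact ⟨t, h2, h1⟩))
    (by intro z; induction z using Quotient.ind; rfl)

/-- The map `(g,h) ↦ (h⁻¹g⁻¹, h)` on generating pairs. -/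
def deltaPair {G : Type} [Group G] (p : ↥(GenPairs G)) : ↥(GenPairs G) :=
  ⟨((p : G × G).2⁻¹ * (p : G × G).1⁻¹, (p : G × G).2), by
    have hp : Subgroup.closure {(p : G × G).1, (p : G × G).2} = ⊤ := p.2
    show Subgroup.closure {(p : G × G).2⁻¹ * (p : G × G).1⁻¹, (p : G × G).2} = ⊤
    rw [eq_top_iff, ← hp]
    refine (Subgroup.closure_le _).mpr ?_
    have hb : (p : G × G).2 ∈
        Subgroup.closure ({(p : G × G).2⁻¹ * (p : G × G).1⁻¹, (p : G × G).2} : Set G) :=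
      Subgroup.subset_closure (by simp)
    have hc : (p : G × G).2⁻¹ * (p : G × G).1⁻¹ ∈
        Subgroup.closure ({(p : G × G).2⁻¹ * (p : G × G).1⁻¹, (p : G × G).2} : Set G) :=
      Subgroup.subset_closure (by simp)
    have ha : (p : G × G).1 ∈
        Subgroup.closure ({(p : G × G).2⁻¹ * (p : G × G).1⁻¹, (p : G × G).2} : Set G) := by
      have := Subgroup.inv_mem _ (Subgroup.mul_mem _ hb hc)
      simpa [mul_assoc] using this
    rintro z hz
    rcases hz with rfl | rfl
    · exact ha
    · exact hb⟩

/-- The permutation `δ̄` of `𝒫_c`, given by `[g,h]_c ↦ [h⁻¹g⁻¹,h]_c`. -/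
def deltaBar (G : Type) [Group G] : Equiv.Perm (PC G) :=
  Function.Involutive.toPerm
    (Quotient.map deltaPair (by
      rintro p q ⟨t, h1, h2⟩
      refine ⟨t, ?_, h2⟩
      show t * ((p : G × G).2⁻¹ * (p : G × G).1⁻¹) * t⁻¹ = (q : G × G).2⁻¹ * (q : G × G).1⁻¹
      rw [← h1, ← h2]; group))
    (by
      intro z
      induction z using Quotient.ind with
      | _ p =>
        apply Quotient.sound
        refine ⟨(p : G × G).2, ?_, ?_⟩
        · show (p : G × G).2 * ((p : G × G).2⁻¹ * ((p : G × G).2⁻¹ * (p : G × G).1⁻¹)⁻¹) *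
            (p : G × G).2⁻¹ = (p : G × G).1
          group
        · show (p : G × G).2 * (p : G × G).2 * (p : G × G).2⁻¹ = (p : G × G).2
          group)

/-- The relation on `𝒫_c` of being `(G×G)`-related: `[a₁,b₁]_c` and `[a₂,b₂]_c` are related
when `a₁` is conjugate to `a₂` and `b₁` is conjugate to `b₂`. -/
def pcRel {G : Type} [Group G] : PC G → PC G → Prop :=
  Quotient.lift₂
    (fun p q => IsConj (p : G × G).1 (q : G × G).1 ∧ IsConj (p : G × G).2 (q : G × G).2)
    (by
      rintro p q p' q' ⟨t, h1, h2⟩ ⟨u, h3, h4⟩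
      have hp1 : IsConj (p : G × G).1 (p' : G × G).1 := isConj_iff.mpr ⟨t, h1⟩
      have hp2 : IsConj (p : G × G).2 (p' : G × G).2 := isConj_iff.mpr ⟨t, h2⟩
      have hq1 : IsConj (q : G × G).1 (q' : G × G).1 := isConj_iff.mpr ⟨u, h3⟩
      have hq2 : IsConj (q : G × G).2 (q' : G × G).2 := isConj_iff.mpr ⟨u, h4⟩
      rw [eq_iff_iff]
      constructor
      · rintro ⟨ha, hb⟩
        exact ⟨(hp1.symm.trans ha).trans hq1, (hp2.symm.trans hb).trans hq2⟩
      · rintro ⟨ha, hb⟩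
        exact ⟨(hp1.trans ha).trans hq1.symm, (hp2.trans hb).trans hq2.symm⟩)

/-- The group `𝒮(G)`: permutations of `𝒫_c` preserving the `(G×G)`-relation and commuting
with `θ̄`, `δ̄` and the action of `Out(G)`. -/
def SG (G : Type) [Group G] : Subgroup (Equiv.Perm (PC G)) where
  carrier := {π | (∀ z, pcRel z (π z)) ∧ Commute π (thetaBar G) ∧ Commute π (deltaBar G) ∧
    ∀ (α : MulAut G) (z : PC G), π (α • z) = α • (π z)}
  one_mem' := by
    have hrefl : ∀ z : PC G, pcRel z z := fun z =>
      Quotient.inductionOn z (fun p => ⟨IsConj.refl _, IsConj.refl _⟩)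
    exact ⟨fun z => hrefl z, Commute.one_left _, Commute.one_left _, fun α z => rfl⟩
  mul_mem' := by
    rintro π ρ ⟨hY1, ht1, hd1, ha1⟩ ⟨hY2, ht2, hd2, ha2⟩
    have htrans : ∀ a b c : PC G, pcRel a b → pcRel b c → pcRel a c := fun a b c =>
      Quotient.inductionOn₃ a b c
        (fun p q s h1 h2 => ⟨h1.1.trans h2.1, h1.2.trans h2.2⟩)
    refine ⟨fun z => htrans _ _ _ (hY2 z) (hY1 (ρ z)), Commute.mul_left ht1 ht2,
      Commute.mul_left hd1 hd2, fun α z => ?_⟩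
    show π (ρ (α • z)) = α • π (ρ z)
    rw [ha2, ha1]
  inv_mem' := by
    rintro π ⟨hY, ht, hd, ha⟩
    have hsymm : ∀ a b : PC G, pcRel a b → pcRel b a := fun a b =>
      Quotient.inductionOn₂ a b (fun p q h => ⟨h.1.symm, h.2.symm⟩)
    refine ⟨fun z => ?_, ht.inv_left, hd.inv_left, fun α z => ?_⟩
    · have h2 := hY (π⁻¹ z)
      rw [Equiv.Perm.coe_inv, Equiv.apply_symm_apply] at h2
      exact hsymm _ _ h2
    · apply π.injective
      show π (π⁻¹ (α • z)) = π (α • π⁻¹ z)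
      rw [Equiv.Perm.coe_inv, Equiv.apply_symm_apply, ha, Equiv.apply_symm_apply]

/-- The automorphism of `Fin n → A` permuting the coordinates by `σ`. -/
def permAut (A : Type) [Group A] {n : ℕ} (σ : Equiv.Perm (Fin n)) : MulAut (Fin n → A) where
  toFun f := f ∘ σ.symm
  invFun f := f ∘ σ
  left_inv f := by ext i; simp
  right_inv f := by ext i; simp
  map_mul' f g := rfl

/-- The homomorphism `S_n → Aut(A^n)` permuting the coordinates. -/
def permHom (A : Type) [Group A] (n : ℕ) : Equiv.Perm (Fin n) →* MulAut (Fin n → A) where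
  toFun := permAut A
  map_one' := rfl
  map_mul' σ τ := rfl

/-- The wreath product `A ≀ S_n`, i.e. the semidirect product of `A^n` by the symmetric
group `S_n` permuting the factors. -/
abbrev Wreath (A : Type) [Group A] (n : ℕ) : Type :=
  (Fin n → A) ⋊[permHom A n] Equiv.Perm (Fin n)

/-- The subgroup `H` of `Sym(𝒫_c)` generated by the image of the `Out(G)`-action together
with `θ̄` and `δ̄`. -/
def Hgrp (G : Type) [Group G] : Subgroup (Equiv.Perm (PC G)) :=
  Subgroup.closure
    ({thetaBar G, deltaBar G} ∪ Set.range (MulAction.toPermHom (MulAut G) (PC G)))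


/-!
`𝒮(G)` consists of the permutations of `𝒫_c` that commute with `H` and move every point within
its `(G×G)`-class. Call two points twins when `g • x ↦ g • y` is a well-defined bijection of their
`H`-orbits respecting the classes. Such a permutation sends each `H`-orbit to a twin orbit, so
grouping the `r_k` orbits of the `k`-th class of twin orbits gives `𝒮(G) ≅ ∏ E_k ≀ S_{r_k}`, where
`E_k` is the group of class-respecting `H`-equivariant permutations of one orbit `H • b`, a quotient
of the subgroup `{n ∈ H | b and n • b are twins}`.

Representatives of the orbits of one twin class are pairwise `(G×G)`-related. On a `(G×G)`-class
`G ⧸ Z` acts freely by conjugation, and its pairs lie in a product of two conjugacy classes, so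
`r_k · |G| / |Z| ≤ m²`. Finally the image of `Out(G)` in `H` already has `r` orbits, so `H` has at
most `r` orbits; trivial factors `1 ≀ S_1` make up the difference.
-/

theorem Wreath.mul_left_apply {A : Type} [Group A] {n : ℕ} (x y : Wreath A n) (i : Fin n) :
    (x * y).left i = x.left i * y.left (x.right.symm i) :=
  rfl

instance SemidirectProduct.instSubsingleton {N G : Type*} [Group N] [Group G] {φ : G →* MulAut N}
    [Subsingleton N] [Subsingleton G] : Subsingleton (N ⋊[φ] G) :=
  ⟨fun _ _ => SemidirectProduct.ext (Subsingleton.elim _ _) (Subsingleton.elim _ _)⟩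

def MulEquiv.piCongrLeft' {ι ι' : Type*} (M : ι → Type*) [∀ i, Mul (M i)] (e : ι ≃ ι') :
    (∀ i, M i) ≃* ∀ i', M (e.symm i') :=
  { Equiv.piCongrLeft' M e with map_mul' := fun _ _ => rfl }

def MulEquiv.piSumOfSubsingletonRight {α β : Type*} (M : α ⊕ β → Type*)
    [∀ i, MulOneClass (M i)] [∀ b, Subsingleton (M (.inr b))] :
    (∀ i, M i) ≃* ∀ a, M (.inl a) where
  toFun y a := y (.inl a)
  invFun x := fun
    | .inl a => x a
    | .inr _ => 1
  left_inv _ := funext fun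
    | .inl _ => rfl
    | .inr _ => Subsingleton.elim _ _
  right_inv _ := rfl
  map_mul' _ _ := rfl

theorem exists_pad_pi_wreath {P : Type} [Group P] {t : ℕ} (s : Fin t → ℕ)
    (E : Fin t → Subgroup P) (pad : ℕ) :
    ∃ (s' : Fin (t + pad) → ℕ) (E' : Fin (t + pad) → Subgroup P),
      ∑ k, s' k = ∑ k, s k + pad ∧
      (∀ k, (∃ i, s' k = s i ∧ E' k = E i) ∨ (0 < pad ∧ s' k = 1 ∧ E' k = ⊥)) ∧
      Nonempty ((∀ k, Wreath (E k) (s k)) ≃* ∀ k, Wreath (E' k) (s' k)) := by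
  let s'' : Fin t ⊕ Fin pad → ℕ := Sum.elim s fun _ => 1
  let E'' : Fin t ⊕ Fin pad → Subgroup P := Sum.elim E fun _ => ⊥
  have : ∀ j, Subsingleton (Wreath (E'' (.inr j)) (s'' (.inr j))) := fun _ =>
    inferInstanceAs (Subsingleton (Wreath (⊥ : Subgroup P) 1))
  refine ⟨fun k => s'' (finSumFinEquiv.symm k), fun k => E'' (finSumFinEquiv.symm k), ?_,
    fun k => ?_, ⟨(MulEquiv.piSumOfSubsingletonRight fun i => Wreath (E'' i) (s'' i)).symm.trans
      (MulEquiv.piCongrLeft' _ finSumFinEquiv)⟩⟩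
  · rw [Equiv.sum_comp finSumFinEquiv.symm s'', Fintype.sum_sum_type]
    simp [s'']
  · beta_reduce
    generalize finSumFinEquiv.symm k = i
    rcases i with i | j
    · exact Or.inl ⟨i, rfl, rfl⟩
    · exact Or.inr ⟨j.pos, rfl, rfl⟩

namespace MulAction

section Twins

variable (H : Type*) {X : Type*} [Group H] [MulAction H X]

/-- `x` and `y` are twins when `g • x ↦ g • y` is a well-defined bijection between their orbits
moving every point within its `R`-class. -/
def Twin (R : Setoid X) (x y : X) : Prop :=
  stabilizer H x = stabilizer H y ∧ ∀ g : H, R (g • x) (g • y)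

open Classical in
/-- `g • x ↦ g • y`, well defined when `stabilizer H x ≤ stabilizer H y`, and the identity off the
orbit of `x`. -/
noncomputable def orbitTransfer (x y z : X) : X :=
  if hz : z ∈ orbit H x then (mem_orbit_iff.mp hz).choose • y else z

def classwiseCentralizer (R : Setoid X) : Subgroup (Equiv.Perm X) where
  carrier := {ψ | (∀ (g : H) x, ψ (g • x) = g • ψ x) ∧ ∀ x, R x (ψ x)}
  one_mem' := ⟨fun _ _ => rfl, fun x => R.refl x⟩
  mul_mem' := by
    rintro ψ φ ⟨hψ, hψR⟩ ⟨hφ, hφR⟩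
    exact ⟨fun g x => by simp [hφ, hψ], fun x => R.trans (hφR x) (hψR (φ x))⟩
  inv_mem' := by
    rintro ψ ⟨hψ, hψR⟩
    refine ⟨fun g x => ψ.injective ?_, fun x => ?_⟩
    · simp [hψ]
    · simpa using R.symm (hψR (ψ⁻¹ x))

def orbitCentralizer (R : Setoid X) (b : X) : Subgroup (Equiv.Perm X) :=
  classwiseCentralizer H R ⊓ fixingSubgroup (Equiv.Perm X) (orbit H b)ᶜ

variable {H} {R : Setoid X} {x y z : X}

namespace Twin

theorem refl (x : X) : Twin H R x x := ⟨rfl, fun _ => R.refl _⟩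

theorem symm (h : Twin H R x y) : Twin H R y x := ⟨h.1.symm, fun g => R.symm (h.2 g)⟩

theorem trans (h₁ : Twin H R x y) (h₂ : Twin H R y z) : Twin H R x z :=
  ⟨h₁.1.trans h₂.1, fun g => R.trans (h₁.2 g) (h₂.2 g)⟩

theorem rel (h : Twin H R x y) : R x y := by simpa using h.2 1

theorem smul (h : Twin H R x y) (g : H) : Twin H R (g • x) (g • y) :=
  ⟨by rw [stabilizer_smul_eq_stabilizer_map_conj, stabilizer_smul_eq_stabilizer_map_conj, h.1],
    fun g' => by simpa only [smul_smul] using h.2 (g' * g)⟩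

theorem smul_eq_smul (h : Twin H R x y) {g g' : H} (hg : g • x = g' • x) : g • y = g' • y := by
  have hx : g'⁻¹ * g ∈ stabilizer H x := by rw [mem_stabilizer_iff, mul_smul, hg, inv_smul_smul]
  rw [h.1, mem_stabilizer_iff, mul_smul, inv_smul_eq_iff] at hx
  exact hx

theorem orbitTransfer_smul (h : Twin H R x y) (g : H) : orbitTransfer H x y (g • x) = g • y := by
  have hg : g • x ∈ orbit H x := mem_orbit x g
  rw [orbitTransfer, dif_pos hg]
  exact h.smul_eq_smul (mem_orbit_iff.mp hg).choose_spec

end Twin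

theorem orbitTransfer_of_notMem (hz : z ∉ orbit H x) : orbitTransfer H x y z = z := dif_neg hz

theorem smul_mem_orbit_iff (g : H) : g • z ∈ orbit H x ↔ z ∈ orbit H x := by
  rw [← orbit_eq_iff, orbit_smul, orbit_eq_iff]

theorem twin_apply_of_mem_classwiseCentralizer {ψ : Equiv.Perm X}
    (hψ : ψ ∈ classwiseCentralizer H R) (x : X) : Twin H R x (ψ x) := by
  refine ⟨Subgroup.ext fun g => ?_, fun g => hψ.1 g x ▸ hψ.2 (g • x)⟩
  rw [mem_stabilizer_iff, mem_stabilizer_iff, ← hψ.1, ψ.injective.eq_iff]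

section orbitCentralizer

variable {b : X} {e e' : Equiv.Perm X}

theorem apply_eq_of_mem_orbitCentralizer (he : e ∈ orbitCentralizer H R b)
    (hz : z ∉ orbit H b) : e z = z :=
  (mem_fixingSubgroup_iff _).mp he.2 z hz

theorem exists_apply_eq_smul_of_mem_orbitCentralizer (he : e ∈ orbitCentralizer H R b) :
    ∃ u : H, e b = u • b := by
  have hb : e b ∈ orbit H b := by
    by_contra hb
    rw [e.injective (apply_eq_of_mem_orbitCentralizer he hb)] at hb
    exact hb (mem_orbit_self b)
  obtain ⟨u, hu⟩ := mem_orbit_iff.mp hb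
  exact ⟨u, hu.symm⟩

theorem orbitCentralizer_ext (he : e ∈ orbitCentralizer H R b) (he' : e' ∈ orbitCentralizer H R b)
    (h : e b = e' b) : e = e' := by
  ext z
  by_cases hz : z ∈ orbit H b
  · obtain ⟨g, rfl⟩ := mem_orbit_iff.mp hz
    rw [he.1.1, he'.1.1, h]
  · rw [apply_eq_of_mem_orbitCentralizer he hz, apply_eq_of_mem_orbitCentralizer he' hz]

theorem exists_mem_orbitCentralizer_apply_eq {u : H} (hu : Twin H R b (u • b)) :
    ∃ e ∈ orbitCentralizer H R b, e b = u • b := by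
  have hu' : Twin H R b (u⁻¹ • b) := by simpa using (hu.smul u⁻¹).symm
  have transfer_smul : ∀ g : H, orbitTransfer H b (u • b) (g • b) = (g * u) • b := fun g => by
    rw [hu.orbitTransfer_smul, smul_smul]
  let e : Equiv.Perm X :=
    { toFun := orbitTransfer H b (u • b)
      invFun := orbitTransfer H b (u⁻¹ • b)
      left_inv := fun z => by
        by_cases hz : z ∈ orbit H b
        · obtain ⟨g, rfl⟩ := mem_orbit_iff.mp hz
          rw [transfer_smul, hu'.orbitTransfer_smul, smul_smul, mul_inv_cancel_right]
        · rw [orbitTransfer_of_notMem hz, orbitTransfer_of_notMem hz]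
      right_inv := fun z => by
        by_cases hz : z ∈ orbit H b
        · obtain ⟨g, rfl⟩ := mem_orbit_iff.mp hz
          rw [hu'.orbitTransfer_smul, smul_smul, transfer_smul, inv_mul_cancel_right]
        · rw [orbitTransfer_of_notMem hz, orbitTransfer_of_notMem hz] }
  refine ⟨e, ⟨⟨fun g z => ?_, fun z => ?_⟩, (mem_fixingSubgroup_iff _).mpr fun z hz => ?_⟩, ?_⟩
  · show orbitTransfer H b (u • b) (g • z) = g • orbitTransfer H b (u • b) z
    by_cases hz : z ∈ orbit H b
    · obtain ⟨g', rfl⟩ := mem_orbit_iff.mp hz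
      rw [smul_smul, transfer_smul, transfer_smul, smul_smul, mul_assoc]
    · rw [orbitTransfer_of_notMem hz, orbitTransfer_of_notMem ((smul_mem_orbit_iff g).not.mpr hz)]
  · show R z (orbitTransfer H b (u • b) z)
    by_cases hz : z ∈ orbit H b
    · obtain ⟨g, rfl⟩ := mem_orbit_iff.mp hz
      rw [transfer_smul, ← smul_smul]
      exact hu.2 g
    · rw [orbitTransfer_of_notMem hz]
  · exact orbitTransfer_of_notMem hz
  · show orbitTransfer H b (u • b) b = u • b
    simpa using transfer_smul 1

variable (H R b) in
def twinStabilizer : Subgroup H where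
  carrier := {n | Twin H R b (n • b)}
  one_mem' := by simpa using Twin.refl b
  mul_mem' {n n'} hn hn' := by
    show Twin H R b ((n * n') • b)
    rw [mul_smul]
    exact hn.trans (hn'.smul n)
  inv_mem' {n} hn := by simpa using (hn.smul n⁻¹).symm

variable (R b) in
theorem exists_surjective_onto_orbitCentralizer :
    ∃ (K : Subgroup H) (f : K →* orbitCentralizer H R b), Function.Surjective f := by
  choose e he using fun n : twinStabilizer H R b =>
    exists_mem_orbitCentralizer_apply_eq ((twinStabilizer H R b).inv_mem n.2)
  refine ⟨twinStabilizer H R b,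
    { toFun := fun n => ⟨e n, (he n).1⟩
      map_one' := Subtype.ext <| orbitCentralizer_ext (he 1).1 (Subgroup.one_mem _) (by
        simp [(he 1).2])
      map_mul' := fun n n' => Subtype.ext <| orbitCentralizer_ext (he _).1
        (Subgroup.mul_mem _ (he n).1 (he n').1) (by
          simp [(he _).2, (he n).1.1.1, smul_smul]) }, fun e' => ?_⟩
  obtain ⟨u, hu⟩ := exists_apply_eq_smul_of_mem_orbitCentralizer e'.2
  have hu' : u ∈ twinStabilizer H R b := by
    simpa [twinStabilizer, hu] using twin_apply_of_mem_classwiseCentralizer e'.2.1 b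
  refine ⟨⟨u⁻¹, Subgroup.inv_mem _ hu'⟩, Subtype.ext <| orbitCentralizer_ext (he _).1 e'.2 ?_⟩
  simp [(he _).2, hu]

end orbitCentralizer

end Twins

section Decomposition

variable {H : Type*} [Group H] {X : Type} [MulAction H X]

variable (H) in
/-- One point `rep k j` in each orbit, indexed so that the orbits of the `k`-th class are exactly
those containing a twin of `base k`. -/
structure TwinTransversal (R : Setoid X) where
  t : ℕ
  s : Fin t → ℕ
  base : Fin t → X
  rep : (k : Fin t) → Fin (s k) → X
  twin_rep : ∀ k j, Twin H R (base k) (rep k j)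
  bijective_rep : Function.Bijective fun p : Σ k, Fin (s k) =>
    (Quotient.mk (orbitRel H X) (rep p.1 p.2))
  eq_of_twin : ∀ k k' (g : H), Twin H R (base k) (g • base k') → k = k'

variable (H) in
def twinOrbitSetoid (R : Setoid X) : Setoid (orbitRel.Quotient H X) where
  r p q := ∃ g : H, Twin H R p.out (g • q.out)
  iseqv :=
    ⟨fun p => ⟨1, by simpa using Twin.refl p.out⟩,
      fun ⟨g, hpq⟩ => ⟨g⁻¹, by simpa using (hpq.smul g⁻¹).symm⟩,
      fun ⟨g, hpq⟩ ⟨g', hqr⟩ => ⟨g * g', hpq.trans (by simpa [mul_smul] using hqr.smul g)⟩⟩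

theorem TwinTransversal.nonempty [Finite X] (R : Setoid X) : Nonempty (TwinTransversal H R) := by
  let S := twinOrbitSetoid H R
  let eC : Quotient S ≃ Fin (Nat.card (Quotient S)) := Finite.equivFin _
  let F : Quotient S → Type := fun c => {q // Quotient.mk S q = c}
  let eF : ∀ k, F (eC.symm k) ≃ Fin (Nat.card (F (eC.symm k))) := fun k => Finite.equivFin _
  let O : (Σ k, Fin (Nat.card (F (eC.symm k)))) ≃ orbitRel.Quotient H X :=
    (Equiv.sigmaCongrRight fun k => (eF k).symm).trans
      ((Equiv.sigmaCongrLeft eC.symm).trans (Equiv.sigmaFiberEquiv (Quotient.mk S)))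
  have hO : ∀ k j, ∃ g : H, Twin H R (eC.symm k).out.out (g • (O ⟨k, j⟩).out) := fun k j =>
    Quotient.exact (((Quotient.out_eq _).trans ((eF k).symm j).2.symm))
  choose u hu using hO
  refine ⟨{
    t := Nat.card (Quotient S)
    s := fun k => Nat.card (F (eC.symm k))
    base := fun k => (eC.symm k).out.out
    rep := fun k j => u k j • (O ⟨k, j⟩).out
    twin_rep := hu
    bijective_rep := ?_
    eq_of_twin := fun k k' g h => eC.symm.injective ?_ }⟩
  · convert O.bijective with p
    exact (Quotient.sound (mem_orbit _ _)).trans (Quotient.out_eq _)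
  · exact (Quotient.out_eq _).symm.trans <|
      (Quotient.sound (s := S) (a := (eC.symm k).out) (b := (eC.symm k').out) ⟨g, h⟩).trans
        (Quotient.out_eq _)

namespace TwinTransversal

variable {R : Setoid X} (T : TwinTransversal H R)

abbrev factor (k : Fin T.t) : Subgroup (Equiv.Perm X) := orbitCentralizer H R (T.base k)

noncomputable def index (z : X) : Σ k, Fin (T.s k) :=
  (Equiv.ofBijective _ T.bijective_rep).symm (Quotient.mk _ z)

theorem mem_orbit_rep_index (z : X) : z ∈ orbit H (T.rep (T.index z).1 (T.index z).2) :=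
  Quotient.exact ((Equiv.ofBijective _ T.bijective_rep).apply_symm_apply _).symm

theorem index_smul_rep (g : H) {k : Fin T.t} (j : Fin (T.s k)) :
    T.index (g • T.rep k j) = ⟨k, j⟩ :=
  (Equiv.ofBijective _ T.bijective_rep).symm_apply_eq.mpr (Quotient.sound (mem_orbit _ g))

theorem exists_eq_smul_rep (z : X) :
    ∃ (k : Fin T.t) (j : Fin (T.s k)) (g : H), z = g • T.rep k j :=
  let ⟨g, hg⟩ := mem_orbit_iff.mp (T.mem_orbit_rep_index z)
  ⟨_, _, g, hg.symm⟩

theorem eq_of_mem_orbit_rep {k : Fin T.t} {j j' : Fin (T.s k)}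
    (h : T.rep k j ∈ orbit H (T.rep k j')) : j = j' := by
  simpa using T.bijective_rep.1 (a₁ := ⟨k, j⟩) (a₂ := ⟨k, j'⟩) (Quotient.sound h)

theorem sum_s_eq_card_orbits : ∑ k, T.s k = Nat.card (orbitRel.Quotient H X) := by
  simp [← Nat.card_eq_of_bijective _ T.bijective_rep]

theorem s_le_card_rel [Finite X] (k : Fin T.t) : T.s k ≤ Nat.card {y // R (T.base k) y} := by
  have hinj : Function.Injective fun j : Fin (T.s k) =>
      (⟨T.rep k j, (T.twin_rep k j).rel⟩ : {y // R (T.base k) y}) := fun j j' h =>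
    T.eq_of_mem_orbit_rep (by simp only [Subtype.mk.injEq] at h; rw [h]; exact mem_orbit_self _)
  simpa using Nat.card_le_card_of_injective _ hinj
/-- The action of `∏ₖ Eₖ ≀ S_{sₖ}`: a point of the orbit of `rep k j` is carried to the orbit of
`base k`, moved there by a coordinate of `(x k).left`, and carried on to the orbit of
`rep k ((x k).right j)`. -/
noncomputable def act (x : ∀ k, Wreath (T.factor k) (T.s k)) (z : X) : X :=
  let k := (T.index z).1
  let i := (x k).right (T.index z).2
  orbitTransfer H (T.base k) (T.rep k i)
    (((x k).left i : Equiv.Perm X) (orbitTransfer H (T.rep k (T.index z).2) (T.base k) z))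

theorem act_smul_rep (x : ∀ k, Wreath (T.factor k) (T.s k)) {k : Fin T.t} (j : Fin (T.s k))
    (g : H) {u : H} (hu : ((x k).left ((x k).right j) : Equiv.Perm X) (T.base k) = u • T.base k) :
    T.act x (g • T.rep k j) = (g * u) • T.rep k ((x k).right j) := by
  simp only [act]
  rw [T.index_smul_rep, (T.twin_rep k j).symm.orbitTransfer_smul,
    ((x k).left ((x k).right j)).2.1.1 g, hu, smul_smul, (T.twin_rep k _).orbitTransfer_smul]

theorem exists_apply_base_eq_smul (x : ∀ k, Wreath (T.factor k) (T.s k)) (k : Fin T.t)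
    (i : Fin (T.s k)) :
    ∃ u : H, ((x k).left i : Equiv.Perm X) (T.base k) = u • T.base k :=
  exists_apply_eq_smul_of_mem_orbitCentralizer ((x k).left i).2

theorem act_smul (x : ∀ k, Wreath (T.factor k) (T.s k)) (g : H) (z : X) :
    T.act x (g • z) = g • T.act x z := by
  obtain ⟨k, j, g', rfl⟩ := T.exists_eq_smul_rep z
  obtain ⟨u, hu⟩ := T.exists_apply_base_eq_smul x k ((x k).right j)
  rw [smul_smul, T.act_smul_rep x j _ hu, T.act_smul_rep x j g' hu, smul_smul, mul_assoc]

theorem act_one (z : X) : T.act 1 z = z := by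
  obtain ⟨k, j, g, rfl⟩ := T.exists_eq_smul_rep z
  rw [T.act_smul_rep 1 j g (u := 1) (by simp), mul_one]
  rfl

theorem act_mul (x y : ∀ k, Wreath (T.factor k) (T.s k)) (z : X) :
    T.act (x * y) z = T.act x (T.act y z) := by
  obtain ⟨k, j, g, rfl⟩ := T.exists_eq_smul_rep z
  obtain ⟨u, hu⟩ := T.exists_apply_base_eq_smul y k ((y k).right j)
  obtain ⟨v, hv⟩ := T.exists_apply_base_eq_smul x k ((x k).right ((y k).right j))
  have huv : (((x * y) k).left (((x * y) k).right j) : Equiv.Perm X) (T.base k) =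
      (u * v) • T.base k := by
    show (((x k * y k).left ((x k).right ((y k).right j)) : Equiv.Perm X)) (T.base k) = _
    rw [Wreath.mul_left_apply, Equiv.symm_apply_apply, Subgroup.coe_mul, Equiv.Perm.mul_apply,
      hu, ((x k).left _).2.1.1, hv, smul_smul]
  rw [T.act_smul_rep y j g hu, T.act_smul_rep x _ (g * u) hv, T.act_smul_rep (x * y) j g huv,
    mul_assoc]
  rfl

noncomputable def toPerm : (∀ k, Wreath (T.factor k) (T.s k)) →* Equiv.Perm X where
  toFun x :=
    { toFun := T.act x
      invFun := T.act x⁻¹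
      left_inv := fun z => by rw [← act_mul, inv_mul_cancel, act_one]
      right_inv := fun z => by rw [← act_mul, mul_inv_cancel, act_one] }
  map_one' := Equiv.ext T.act_one
  map_mul' x y := Equiv.ext (T.act_mul x y)

theorem toPerm_apply (x : ∀ k, Wreath (T.factor k) (T.s k)) (z : X) : T.toPerm x z = T.act x z :=
  rfl

theorem toPerm_mem (x : ∀ k, Wreath (T.factor k) (T.s k)) :
    T.toPerm x ∈ classwiseCentralizer H R := by
  refine ⟨T.act_smul x, fun z => ?_⟩
  obtain ⟨k, j, g, rfl⟩ := T.exists_eq_smul_rep z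
  obtain ⟨u, hu⟩ := T.exists_apply_base_eq_smul x k ((x k).right j)
  have he := ((x k).left ((x k).right j)).2.1
  have hb : R (g • T.base k) ((g * u) • T.base k) := by
    simpa [he.1, hu, smul_smul] using he.2 (g • T.base k)
  rw [toPerm_apply, T.act_smul_rep x j g hu]
  exact R.trans ((T.twin_rep k j).smul g).symm.rel (R.trans hb ((T.twin_rep k _).smul _).rel)

theorem toPerm_injective : Function.Injective T.toPerm := by
  rw [injective_iff_map_eq_one]
  intro x hx
  have hfix : ∀ k (j : Fin (T.s k)), (x k).right j = j ∧ (x k).left ((x k).right j) = 1 := by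
    intro k j
    obtain ⟨u, hu⟩ := T.exists_apply_base_eq_smul x k ((x k).right j)
    have h := T.act_smul_rep x j 1 hu
    rw [one_smul, one_mul, ← toPerm_apply, hx, Equiv.Perm.one_apply] at h
    have hσ : (x k).right j = j := (T.eq_of_mem_orbit_rep (mem_orbit_iff.mpr ⟨u, h.symm⟩)).symm
    refine ⟨hσ, Subtype.ext (orbitCentralizer_ext ((x k).left _).2 (Subgroup.one_mem _) ?_)⟩
    rw [hσ] at h
    rw [hu, (T.twin_rep k j).symm.smul_eq_smul (g' := 1) (by rw [one_smul, ← h])]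
    simp
  funext k
  refine SemidirectProduct.ext (funext fun i => ?_) (Equiv.ext fun j => (hfix k j).1)
  simpa [(hfix k i).1] using (hfix k i).2

theorem exists_mem_orbit_rep_apply {ψ : Equiv.Perm X} (hψ : ψ ∈ classwiseCentralizer H R)
    (k : Fin T.t) (j : Fin (T.s k)) : ∃ j', ψ (T.rep k j) ∈ orbit H (T.rep k j') := by
  obtain ⟨k', j', g, hg⟩ := T.exists_eq_smul_rep (ψ (T.rep k j))
  have htwin := twin_apply_of_mem_classwiseCentralizer hψ (T.rep k j)
  rw [hg] at htwin
  obtain rfl := T.eq_of_twin k k' g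
    ((T.twin_rep k j).trans (htwin.trans ((T.twin_rep k' j').smul g).symm))
  exact ⟨j', hg ▸ mem_orbit _ g⟩

theorem exists_toPerm_eq {ψ : Equiv.Perm X} (hψ : ψ ∈ classwiseCentralizer H R) :
    ∃ x, T.toPerm x = ψ := by
  choose σ₀ hσ₀ using T.exists_mem_orbit_rep_apply hψ
  have hinj : ∀ k, Function.Injective (σ₀ k) := by
    intro k j j' hjj
    obtain ⟨g, hg⟩ := mem_orbit_iff.mp (hσ₀ k j)
    obtain ⟨g', hg'⟩ := mem_orbit_iff.mp (hσ₀ k j')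
    rw [hjj] at hg
    refine T.eq_of_mem_orbit_rep (mem_orbit_iff.mpr ⟨g * g'⁻¹, ψ.injective ?_⟩)
    rw [hψ.1, mul_smul, ← hg', inv_smul_smul, hg]
  let σ k : Equiv.Perm (Fin (T.s k)) :=
    Equiv.ofBijective (σ₀ k) (Finite.injective_iff_bijective.mp (hinj k))
  choose u hu using fun k j => mem_orbit_iff.mp (hσ₀ k j)
  have htwin : ∀ k j, Twin H R (T.base k) (u k j • T.base k) := fun k j =>
    (T.twin_rep k j).trans <| (twin_apply_of_mem_classwiseCentralizer hψ _).trans <|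
      (hu k j).symm ▸ ((T.twin_rep k _).smul (u k j)).symm
  choose e he using fun k j => exists_mem_orbitCentralizer_apply_eq (htwin k j)
  refine ⟨fun k => ⟨fun i => ⟨e k ((σ k).symm i), (he k _).1⟩, σ k⟩, Equiv.ext fun z => ?_⟩
  obtain ⟨k, j, g, rfl⟩ := T.exists_eq_smul_rep z
  have hb : e k ((σ k).symm (σ k j)) (T.base k) = u k j • T.base k := by
    rw [Equiv.symm_apply_apply, (he k j).2]
  rw [toPerm_apply, T.act_smul_rep _ j g hb, hψ.1, ← hu, smul_smul]
  rfl

noncomputable def mulEquiv : (∀ k, Wreath (T.factor k) (T.s k)) ≃* classwiseCentralizer H R :=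
  MulEquiv.ofBijective (T.toPerm.codRestrict _ T.toPerm_mem)
    ⟨fun _ _ hxy => T.toPerm_injective (congrArg Subtype.val hxy),
      fun ψ => (T.exists_toPerm_eq ψ.2).imp fun _ hx => Subtype.ext hx⟩

end TwinTransversal

variable (H) in
theorem exists_classwiseCentralizer_mulEquiv_pi_wreath [Finite X] (R : Setoid X) :
    ∃ (t : ℕ) (s : Fin t → ℕ) (E : Fin t → Subgroup (Equiv.Perm X)),
      ∑ k, s k = Nat.card (orbitRel.Quotient H X) ∧
      (∀ k, ∃ x, s k ≤ Nat.card {y // R x y}) ∧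
      (∀ k, ∃ (K : Subgroup H) (f : K →* E k), Function.Surjective f) ∧
      Nonempty (classwiseCentralizer H R ≃* ∀ k, Wreath (E k) (s k)) := by
  obtain ⟨T⟩ := TwinTransversal.nonempty (H := H) R
  exact ⟨T.t, T.s, T.factor, T.sum_s_eq_card_orbits, fun k => ⟨_, T.s_le_card_rel k⟩,
    fun k => exists_surjective_onto_orbitCentralizer R (T.base k), ⟨T.mulEquiv.symm⟩⟩

end Decomposition

end MulAction

section GenPairs

open MulAction

variable {G : Type} [Group G]

variable (G) in
def pcSetoid : Setoid (PC G) where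
  r := pcRel
  iseqv :=
    ⟨fun z => Quotient.inductionOn z fun _ => ⟨IsConj.refl _, IsConj.refl _⟩,
      fun {z w} => Quotient.inductionOn₂ z w fun _ _ h => ⟨h.1.symm, h.2.symm⟩,
      fun {a b c} => Quotient.inductionOn₃ a b c fun _ _ _ h₁ h₂ =>
        ⟨h₁.1.trans h₂.1, h₁.2.trans h₂.2⟩⟩

theorem commute_of_mem_Hgrp {ψ : Equiv.Perm (PC G)} (hθ : Commute ψ (thetaBar G))
    (hδ : Commute ψ (deltaBar G))
    (hα : ∀ α : MulAut G, Commute ψ (toPermHom (MulAut G) (PC G) α))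
    {π : Equiv.Perm (PC G)} (hπ : π ∈ Hgrp G) : Commute ψ π := by
  induction hπ using Subgroup.closure_induction with
  | mem π hπ =>
    rcases hπ with (rfl | rfl) | ⟨α, rfl⟩
    exacts [hθ, hδ, hα α]
  | one => exact Commute.one_right ψ
  | mul _ _ _ _ h₁ h₂ => exact h₁.mul_right h₂
  | inv _ _ h => exact h.inv_right

theorem SG_eq_classwiseCentralizer : SG G = classwiseCentralizer (Hgrp G) (pcSetoid G) := by
  ext ψ
  constructor
  · rintro ⟨hR, hθ, hδ, hα⟩
    refine ⟨fun π z => ?_, hR⟩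
    exact DFunLike.congr_fun (commute_of_mem_Hgrp hθ hδ (fun α => Equiv.ext (hα α)) π.2) z
  · rintro ⟨hequiv, hR⟩
    have hgen : ∀ π ∈ ({thetaBar G, deltaBar G} ∪ Set.range (toPermHom (MulAut G) (PC G))
        : Set _), Commute ψ π := fun π hπ =>
      Equiv.ext (hequiv ⟨π, Subgroup.subset_closure hπ⟩)
    exact ⟨hR, hgen _ (by simp), hgen _ (by simp),
      fun α => hequiv ⟨_, Subgroup.subset_closure (Or.inr ⟨α, rfl⟩)⟩⟩

theorem card_orbits_Hgrp_le {r : ℕ} (rep : Fin r → G × G) (hrep : ∀ i, rep i ∈ GenPairs G)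
    (hcover : ∀ q ∈ GenPairs G, ∃ i : Fin r, ∃ α : MulAut G, (α (rep i).1, α (rep i).2) = q) :
    Nat.card (orbitRel.Quotient (Hgrp G) (PC G)) ≤ r := by
  have hsurj : Function.Surjective fun i =>
      Quotient.mk (orbitRel (Hgrp G) (PC G)) (pcMk (rep i) (hrep i)) := by
    rintro ⟨⟨q⟩⟩
    obtain ⟨i, α, hα⟩ := hcover q q.2
    refine ⟨i, Quotient.sound (mem_orbit_iff.mpr
      ⟨⟨_, Subgroup.subset_closure (Or.inr ⟨α⁻¹, rfl⟩)⟩, ?_⟩)⟩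
    show α⁻¹ • (Quotient.mk _ q : PC G) = pcMk (rep i) (hrep i)
    rw [inv_smul_eq_iff]
    exact congrArg (Quotient.mk _) (Subtype.ext hα.symm)
  simpa using Nat.card_le_card_of_surjective _ hsurj

theorem commute_inv_mul_of_conj_eq {t t' g : G} (h : t * g * t⁻¹ = t' * g * t'⁻¹) :
    Commute (t'⁻¹ * t) g :=
  calc t'⁻¹ * t * g = t'⁻¹ * (t * g * t⁻¹) * t := by group
    _ = g * (t'⁻¹ * t) := by rw [h]; group

theorem mem_center_of_commute_of_mem_GenPairs {p : G × G} (hp : p ∈ GenPairs G) {c : G}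
    (h₁ : Commute c p.1) (h₂ : Commute c p.2) : c ∈ Subgroup.center G := by
  rw [← Subgroup.centralizer_univ, ← Subgroup.coe_top,
    ← show Subgroup.closure {p.1, p.2} = ⊤ from hp, Subgroup.centralizer_closure,
    Subgroup.mem_centralizer_iff]
  rintro g (rfl | rfl)
  exacts [h₁.symm.eq, h₂.symm.eq]

theorem isConj_out_of_pcRel {p : GenPairs G} {y : PC G} (h : pcRel (Quotient.mk _ p) y) :
    IsConj p.1.1 y.out.1.1 ∧ IsConj p.1.2 y.out.1.2 := by
  rwa [← Quotient.out_eq y] at h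

/-- `(y, tZ) ↦ t • y` on the `(G×G)`-class of `p`, computed on chosen representatives. -/
noncomputable def conjRep (p : GenPairs G)
    (yq : {y // pcRel (Quotient.mk _ p) y} × (G ⧸ Subgroup.center G)) :
    {a // IsConj p.1.1 a} × {b // IsConj p.1.2 b} :=
  (⟨yq.2.out * yq.1.1.out.1.1 * yq.2.out⁻¹,
      (isConj_out_of_pcRel yq.1.2).1.trans (isConj_iff.mpr ⟨_, rfl⟩)⟩,
    ⟨yq.2.out * yq.1.1.out.1.2 * yq.2.out⁻¹,
      (isConj_out_of_pcRel yq.1.2).2.trans (isConj_iff.mpr ⟨_, rfl⟩)⟩)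

/-- `G ⧸ Z` acts freely by simultaneous conjugation on generating pairs. -/
theorem conjRep_injective (p : GenPairs G) : Function.Injective (conjRep p) := by
  rintro ⟨y, q⟩ ⟨y', q'⟩ h
  simp only [conjRep, Prod.mk.injEq, Subtype.mk.injEq] at h
  obtain ⟨h₁, h₂⟩ := h
  have hy : y = y' := Subtype.ext <| by
    rw [← Quotient.out_eq y.1, ← Quotient.out_eq y'.1]
    refine Quotient.sound ⟨q'.out⁻¹ * q.out, ?_, ?_⟩
    · rw [show q'.out⁻¹ * q.out * y.1.out.1.1 * (q'.out⁻¹ * q.out)⁻¹ =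
        q'.out⁻¹ * (q.out * y.1.out.1.1 * q.out⁻¹) * q'.out by group, h₁]
      group
    · rw [show q'.out⁻¹ * q.out * y.1.out.1.2 * (q'.out⁻¹ * q.out)⁻¹ =
        q'.out⁻¹ * (q.out * y.1.out.1.2 * q.out⁻¹) * q'.out by group, h₂]
      group
  subst hy
  have hc := mem_center_of_commute_of_mem_GenPairs y.1.out.2
    (commute_inv_mul_of_conj_eq h₁) (commute_inv_mul_of_conj_eq h₂)
  refine Prod.ext rfl ?_
  rw [← QuotientGroup.out_eq' q, ← QuotientGroup.out_eq' q', QuotientGroup.eq]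
  simpa using (Subgroup.center G).inv_mem hc

theorem card_pcRel_mul_card_le [Finite G] {m : ℕ}
    (hm : IsGreatest {n | ∃ g : G, n = Nat.card {h : G | IsConj g h}} m) (x : PC G) :
    Nat.card {y // pcRel x y} * Nat.card G ≤ Nat.card (Subgroup.center G) * m ^ 2 := by
  induction x using Quotient.ind with | _ p =>
  calc Nat.card {y // pcRel (Quotient.mk _ p) y} * Nat.card G
      = Nat.card ({y // pcRel (Quotient.mk _ p) y} × (G ⧸ Subgroup.center G)) *
          Nat.card (Subgroup.center G) := by
        rw [Nat.card_prod, Subgroup.card_eq_card_quotient_mul_card_subgroup (Subgroup.center G),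
          mul_assoc]
    _ ≤ Nat.card ({a // IsConj p.1.1 a} × {b // IsConj p.1.2 b}) *
          Nat.card (Subgroup.center G) :=
        Nat.mul_le_mul_right _ (Nat.card_le_card_of_injective _ (conjRep_injective p))
    _ ≤ (m * m) * Nat.card (Subgroup.center G) := by
        rw [Nat.card_prod]
        exact Nat.mul_le_mul_right _ (Nat.mul_le_mul (hm.2 ⟨_, rfl⟩) (hm.2 ⟨_, rfl⟩))
    _ = Nat.card (Subgroup.center G) * m ^ 2 := by ring

end GenPairs

theorem stmt16_general (G : Type) [Group G] [Finite G]
    (r : ℕ) (rep : Fin r → G × G)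
    (hrep : ∀ i, rep i ∈ GenPairs G)
    (hcover : ∀ q ∈ GenPairs G, ∃ i : Fin r, ∃ α : MulAut G, (α (rep i).1, α (rep i).2) = q)
    (m : ℕ) (hm : IsGreatest {n | ∃ g : G, n = Nat.card {h : G | IsConj g h}} m) :
    ∃ (t : ℕ) (rk : Fin t → ℕ) (E : Fin t → Type) (instE : ∀ k, Group (E k)),
      letI : ∀ k, Group (E k) := instE
      (∑ k, rk k) = r ∧
      (∀ k, rk k * Nat.card G ≤ Nat.card (Subgroup.center G) * m ^ 2) ∧
      (∀ k, ∃ K : Subgroup ↥(Hgrp G), ∃ f : ↥K →* E k, Function.Surjective f) ∧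
      Nonempty (↥(SG G) ≃* ((k : Fin t) → Wreath (E k) (rk k))) := by
  obtain ⟨t, s, E, hsum, hclass, hsub, ⟨φ⟩⟩ :=
    MulAction.exists_classwiseCentralizer_mulEquiv_pi_wreath (Hgrp G) (pcSetoid G)
  have horbits := card_orbits_Hgrp_le rep hrep hcover
  obtain ⟨s', E', hsum', hpad, ⟨ψ⟩⟩ := exists_pad_pi_wreath s E (r - ∑ k, s k)
  refine ⟨_, s', fun k => E' k, fun k => inferInstance, by omega, fun k => ?_, fun k => ?_,
    ⟨((MulEquiv.subgroupCongr SG_eq_classwiseCentralizer).trans φ).trans ψ⟩⟩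
  · rcases hpad k with ⟨i, hs, -⟩ | ⟨hpos, hs, -⟩ <;> rw [hs]
    · obtain ⟨x, hx⟩ := hclass i
      exact (Nat.mul_le_mul_right _ hx).trans (card_pcRel_mul_card_le hm x)
    · obtain ⟨x⟩ : Nonempty (PC G) := ⟨pcMk (rep ⟨0, by omega⟩) (hrep _)⟩
      have : Nonempty {y // pcRel x y} := ⟨⟨x, (pcSetoid G).refl x⟩⟩
      exact (Nat.mul_le_mul_right _ Nat.card_pos).trans (card_pcRel_mul_card_le hm x)
  · beta_reduce
    rcases hpad k with ⟨i, -, hE⟩ | ⟨-, -, hE⟩ <;> rw [hE]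
    · exact hsub i
    · exact ⟨⊥, 1, fun _ => ⟨1, Subsingleton.elim _ _⟩⟩

/-- `𝒮(G)` is a finite direct product of wreath products `E_k ≀ S_{r_k}` with each `E_k` a
subquotient of `H`, `Σ_k r_k = r`, and `r_k ≤ |Z|·m²/|G|` where `m` is the largest size of a
conjugacy class of `G` and `Z` is the centre of `G`. -/
theorem stmt16 (G : Type) [Group G] [Finite G]
    (r : ℕ) (rep : Fin r → G × G)
    (hrep : ∀ i, rep i ∈ GenPairs G)
    (hdist : ∀ i j : Fin r, (∃ α : MulAut G, (α (rep i).1, α (rep i).2) = rep j) → i = j)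
    (hcover : ∀ q ∈ GenPairs G, ∃ i : Fin r, ∃ α : MulAut G, (α (rep i).1, α (rep i).2) = q)
    (m : ℕ) (hm : IsGreatest {n | ∃ g : G, n = Nat.card {h : G | IsConj g h}} m) :
    ∃ (t : ℕ) (rk : Fin t → ℕ) (E : Fin t → Type) (instE : ∀ k, Group (E k)),
      letI : ∀ k, Group (E k) := instE
      (∑ k, rk k) = r ∧
      (∀ k, rk k * Nat.card G ≤ Nat.card (Subgroup.center G) * m ^ 2) ∧
      (∀ k, ∃ K : Subgroup ↥(Hgrp G), ∃ f : ↥K →* E k, Function.Surjective f) ∧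
      Nonempty (↥(SG G) ≃* ((k : Fin t) → Wreath (E k) (rk k))) :=
  stmt16_general G r rep hrep hcover m hm
end

section
/- Let Γ be a group and G a finite group. Given a pair (g,h) of elements generating G and a group homomorphism φ : Γ → G, regard the set G as an object of the category of finite sets equipped with a right action of the free group F₂ = ⟨x,y⟩ and a commuting left action of Γ, by letting x and y act by right multiplication by g and h respectively, and letting γ ∈ Γ act by left multiplication by φ(γ). Then the objects determined by triples (g,h,φ₁) and (g′,h′,φ₂) (with ⟨g,h⟩ = ⟨g′,h′⟩ = G) are isomorphic — i.e., there exists a bijection G → G commuting with both the right F₂-actions and the left Γ-actions — if and only if there exist an automorphism α of G and an element t ∈ G such that α(g) = g′, α(h) = h′, and α(φ₁(γ)) = t⁻¹ φ₂(γ) t for all γ ∈ Γ. -/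
open Function

theorem Set.range_bool_ite {α : Type*} (a b : α) :
    Set.range (fun c : Bool => if c then a else b) = {a, b} := by
  ext z
  simp [eq_comm, or_comm]

section

variable {G H : Type*} [Group G] [Group H]

theorem FreeGroup.lift_ite_surjective {g h : G} (hgh : Subgroup.closure {g, h} = ⊤) :
    Surjective (FreeGroup.lift fun b : Bool => if b then g else h) := by
  rwa [FreeGroup.lift_surjective_iff_closure_range_eq_top, Set.range_bool_ite]

theorem MonoidHom.map_lift_ite (α : G →* H) (g h : G) (w : FreeGroup Bool) :
    α (FreeGroup.lift (fun b => if b then g else h) w) =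
      FreeGroup.lift (fun b => if b then α g else α h) w := by
  refine FreeGroup.lift_unique (α.comp (FreeGroup.lift _)) fun b => ?_
  cases b <;> simp

theorem map_mul_eq_of_map_mul_right {K : Type*} {e : G → H} {ρ : K → G} (hρ : Surjective ρ)
    {ψ : K → H} (he : ∀ u k, e (u * ρ k) = e u * ψ k) (u v : G) :
    e (u * v) = e u * ((e 1)⁻¹ * e v) := by
  obtain ⟨k, rfl⟩ := hρ v
  have hψ : e (ρ k) = e 1 * ψ k := by simpa using he 1 k
  rw [he, hψ, inv_mul_cancel_left]

def MulEquiv.ofMapMulRight (e : G ≃ H) (he : ∀ u v, e (u * v) = e u * ((e 1)⁻¹ * e v)) :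
    G ≃* H :=
  MulEquiv.mk' (e.trans (Equiv.mulLeft (e 1)⁻¹)) fun u v => by
    simp only [Equiv.trans_apply, Equiv.coe_mulLeft, he, mul_assoc]

theorem MulEquiv.ofMapMulRight_apply (e : G ≃ H)
    (he : ∀ u v, e (u * v) = e u * ((e 1)⁻¹ * e v)) (u : G) :
    MulEquiv.ofMapMulRight e he u = (e 1)⁻¹ * e u :=
  rfl

end

theorem stmt19_general (Γ : Type) [Group Γ] (G : Type) [Group G]
    (g h g' h' : G)
    (hgh : Subgroup.closure {g, h} = ⊤)
    (φ₁ φ₂ : Γ →* G) :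
    (∃ e : G ≃ G,
      (∀ (u : G) (w : F2),
        e (u * FreeGroup.lift (fun b => if b then g else h) w) =
          e u * FreeGroup.lift (fun b => if b then g' else h') w) ∧
      (∀ (γ : Γ) (u : G), e (φ₁ γ * u) = φ₂ γ * e u)) ↔
    (∃ (α : MulAut G) (t : G), α g = g' ∧ α h = h' ∧
      ∀ γ : Γ, α (φ₁ γ) = t⁻¹ * φ₂ γ * t) := by
  constructor
  · rintro ⟨e, hright, hleft⟩
    set α := MulEquiv.ofMapMulRight e
      (map_mul_eq_of_map_mul_right (FreeGroup.lift_ite_surjective hgh) hright)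
    have hα : ∀ w : F2, α (FreeGroup.lift (fun b => if b then g else h) w) =
        FreeGroup.lift (fun b => if b then g' else h') w := fun w => by
      rw [MulEquiv.ofMapMulRight_apply, ← one_mul (FreeGroup.lift _ w), hright, inv_mul_cancel_left]
    refine ⟨α, e 1, by simpa using hα (.of true), by simpa using hα (.of false), fun γ => ?_⟩
    rw [MulEquiv.ofMapMulRight_apply, ← mul_one (φ₁ γ), hleft, mul_assoc]
  · rintro ⟨α, t, rfl, rfl, hφ⟩
    refine ⟨α.toEquiv.trans (Equiv.mulLeft t), fun u w => ?_, fun γ u => ?_⟩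
    · change t * α (u * _) = t * α u * _
      rw [map_mul, ← MulEquiv.coe_toMonoidHom, MonoidHom.map_lift_ite, mul_assoc]
    · change t * α (φ₁ γ * u) = φ₂ γ * (t * α u)
      rw [map_mul, hφ]
      group

/-- Regard `G` as a set with a right `F₂`-action (via a generating pair `(g,h)` and right
multiplication) and a commuting left `Γ`-action (via `φ : Γ →* G` and left multiplication).
Two such objects `(g,h,φ₁)` and `(g′,h′,φ₂)` are isomorphic — there is a bijection `G → G`
commuting with both actions — if and only if there are `α ∈ Aut(G)` and `t ∈ G` with
`α(g) = g′`, `α(h) = h′` and `α(φ₁(γ)) = t⁻¹ φ₂(γ) t` for all `γ ∈ Γ`. -/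
theorem stmt19 (Γ : Type) [Group Γ] (G : Type) [Group G] [Finite G]
    (g h g' h' : G)
    (hgh : Subgroup.closure {g, h} = ⊤) (hg'h' : Subgroup.closure {g', h'} = ⊤)
    (φ₁ φ₂ : Γ →* G) :
    (∃ e : G ≃ G,
      (∀ (u : G) (w : F2),
        e (u * FreeGroup.lift (fun b => if b then g else h) w) =
          e u * FreeGroup.lift (fun b => if b then g' else h') w) ∧
      (∀ (γ : Γ) (u : G), e (φ₁ γ * u) = φ₂ γ * e u)) ↔
    (∃ (α : MulAut G) (t : G), α g = g' ∧ α h = h' ∧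
      ∀ γ : Γ, α (φ₁ γ) = t⁻¹ * φ₂ γ * t) :=
  stmt19_general Γ G g h g' h' hgh φ₁ φ₂
end
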